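/- Suppose f : ℤ → ℤ[t^{±1}] satisfies, for all sufficiently large n, f(n+1) = −(P(t, t^{−2−2n})/P(t, t^{2n}))·f(n) for a fixed nonzero P ∈ ℤ[t^{±1}, M^{±1}] (with P(t, t^{2n}) ≠ 0 for large n), and f(n) ≠ 0 for large n. Then the breadth of f(n) is eventually a linear function of n. -/

import Mathlib

/-- The breadth `d₊ − d₋` of a nonzero Laurent polynomial (junk value `0` for `0`). -/
noncomputable def breadthL (f : LaurentPolynomial ℤ) : ℤ :=
  if h : f.coeff.support.Nonempty then f.coeff.support.max' h - f.coeff.support.min' h else 0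

/-- Substitution `M = t^s` in `P = Σ_k a_k(t) M^k ∈ ℤ[t^{±1}, M^{±1}]`. -/
noncomputable def subM (P : LaurentPolynomial (LaurentPolynomial ℤ)) (s : ℤ) :
    LaurentPolynomial ℤ :=
  P.coeff.sum fun k a => a * LaurentPolynomial.T (s * k)

/-! Over a domain the top and bottom `t`-degrees of a product of nonzero Laurent polynomials
are the sums of those of the factors, so the recurrence gives
`breadth f(n+1) - breadth f(n) = breadth P(t, t^(-2-2n)) - breadth P(t, t^(2n))`.
For `s → ±∞` the top (bottom) `t`-degree of `P(t, t^s) = Σ_k a_k(t) t^(s k)` is attained by a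
single term, the one with `k` extremal in the direction of `s`, so `breadth P(t, t^s)` is
eventually affine in `|s|` with slope the `M`-breadth of `P`. Hence the difference above is
eventually constant and `breadth f(n)` is eventually linear. -/

namespace LaurentPolynomial

section Semiring

variable {R : Type*} [Semiring R] {f g : R[T;T⁻¹]} {n : ℤ}

noncomputable def maxDegree (f : R[T;T⁻¹]) : ℤ := f.degree.unbotD 0

noncomputable def minDegree (f : R[T;T⁻¹]) : ℤ := f.coeff.support.min.untopD 0

@[simp] lemma maxDegree_zero : maxDegree (0 : R[T;T⁻¹]) = 0 := rfl

@[simp] lemma minDegree_zero : minDegree (0 : R[T;T⁻¹]) = 0 := rfl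

lemma support_coeff_nonempty (hf : f ≠ 0) : f.coeff.support.Nonempty :=
  Finsupp.support_nonempty_iff.2 (mt AddMonoidAlgebra.coeff_eq_zero.1 hf)

lemma ne_zero_of_coeff_ne_zero (h : f.coeff n ≠ 0) : f ≠ 0 := by
  rintro rfl; exact h rfl

lemma maxDegree_eq_max' (hf : f ≠ 0) :
    maxDegree f = f.coeff.support.max' (support_coeff_nonempty hf) := by
  rw [maxDegree, degree, ← Finset.coe_max', WithBot.unbotD_coe]

lemma minDegree_eq_min' (hf : f ≠ 0) :
    minDegree f = f.coeff.support.min' (support_coeff_nonempty hf) := by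
  rw [minDegree, ← Finset.coe_min', WithTop.untopD_coe]

lemma le_maxDegree (h : f.coeff n ≠ 0) : n ≤ maxDegree f := by
  rw [maxDegree_eq_max' (ne_zero_of_coeff_ne_zero h)]
  exact Finset.le_max' _ _ (Finsupp.mem_support_iff.2 h)

lemma minDegree_le (h : f.coeff n ≠ 0) : minDegree f ≤ n := by
  rw [minDegree_eq_min' (ne_zero_of_coeff_ne_zero h)]
  exact Finset.min'_le _ _ (Finsupp.mem_support_iff.2 h)

lemma coeff_maxDegree_ne_zero (hf : f ≠ 0) : f.coeff (maxDegree f) ≠ 0 := by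
  rw [maxDegree_eq_max' hf]
  exact Finsupp.mem_support_iff.1 (Finset.max'_mem _ _)

lemma coeff_minDegree_ne_zero (hf : f ≠ 0) : f.coeff (minDegree f) ≠ 0 := by
  rw [minDegree_eq_min' hf]
  exact Finsupp.mem_support_iff.1 (Finset.min'_mem _ _)

lemma coeff_eq_zero_of_maxDegree_lt (h : maxDegree f < n) : f.coeff n = 0 := by
  contrapose! h
  exact le_maxDegree h

lemma coeff_eq_zero_of_lt_minDegree (h : n < minDegree f) : f.coeff n = 0 := by
  contrapose! h
  exact minDegree_le h

lemma maxDegree_eq_of_coeff_ne_zero (h : f.coeff n ≠ 0) (hgt : ∀ m, n < m → f.coeff m = 0) :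
    maxDegree f = n :=
  le_antisymm (not_lt.1 fun hlt => coeff_maxDegree_ne_zero (ne_zero_of_coeff_ne_zero h)
    (hgt _ hlt)) (le_maxDegree h)

lemma maxDegree_T [Nontrivial R] (n : ℤ) : maxDegree (T n : R[T;T⁻¹]) = n :=
  maxDegree_eq_of_coeff_ne_zero (by simp) fun m hm => by simp [hm.ne]

lemma maxDegree_mul [NoZeroDivisors R] (hf : f ≠ 0) (hg : g ≠ 0) :
    maxDegree (f * g) = maxDegree f + maxDegree g := by
  classical
  refine maxDegree_eq_of_coeff_ne_zero ?_ fun m hm => ?_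
  · have hunique : UniqueAdd f.coeff.support g.coeff.support (maxDegree f) (maxDegree g) :=
      fun a b ha hb hab => (add_eq_add_iff_eq_and_eq
        (le_maxDegree (Finsupp.mem_support_iff.1 ha))
        (le_maxDegree (Finsupp.mem_support_iff.1 hb))).1 hab
    rw [AddMonoidAlgebra.coeff_mul_add_of_uniqueAdd hunique]
    exact mul_ne_zero (coeff_maxDegree_ne_zero hf) (coeff_maxDegree_ne_zero hg)
  · by_contra hne
    obtain ⟨a, ha, b, hb, rfl⟩ := Finset.mem_add.1
      (AddMonoidAlgebra.support_coeff_mul_subset f g (Finsupp.mem_support_iff.2 hne))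
    have := le_maxDegree (Finsupp.mem_support_iff.1 ha)
    have := le_maxDegree (Finsupp.mem_support_iff.1 hb)
    omega

lemma maxDegree_sum_of_lt {ι : Type*} {s : Finset ι} {g : ι → R[T;T⁻¹]} {i : ι}
    (hi : i ∈ s) (hgi : g i ≠ 0)
    (hlt : ∀ j ∈ s, j ≠ i → maxDegree (g j) < maxDegree (g i)) :
    maxDegree (∑ j ∈ s, g j) = maxDegree (g i) := by
  refine maxDegree_eq_of_coeff_ne_zero ?_ fun m hm => ?_
  · rw [AddMonoidAlgebra.coeff_sum, Finsupp.finsetSum_apply, Finset.sum_eq_single_of_mem i hi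
      fun j hj hji => coeff_eq_zero_of_maxDegree_lt (hlt j hj hji)]
    exact coeff_maxDegree_ne_zero hgi
  · rw [AddMonoidAlgebra.coeff_sum, Finsupp.finsetSum_apply]
    refine Finset.sum_eq_zero fun j hj => coeff_eq_zero_of_maxDegree_lt ?_
    obtain rfl | hji := eq_or_ne j i
    · exact hm
    · exact (hlt j hj hji).trans hm

end Semiring

section CommSemiring

variable {R : Type*} [CommSemiring R] {f g : R[T;T⁻¹]}

lemma minDegree_eq_neg_maxDegree_invert (f : R[T;T⁻¹]) :
    minDegree f = -maxDegree (invert f) := by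
  obtain rfl | hf := eq_or_ne f 0
  · simp
  rw [maxDegree_eq_of_coeff_ne_zero (n := -minDegree f)
    (by simpa using coeff_minDegree_ne_zero hf)
    fun m hm => by simpa using coeff_eq_zero_of_lt_minDegree (by omega), neg_neg]

lemma maxDegree_invert (f : R[T;T⁻¹]) : maxDegree (invert f) = -minDegree f := by
  rw [minDegree_eq_neg_maxDegree_invert, neg_neg]

lemma minDegree_invert (f : R[T;T⁻¹]) : minDegree (invert f) = -maxDegree f := by
  rw [minDegree_eq_neg_maxDegree_invert, involutive_invert]

lemma minDegree_mul [NoZeroDivisors R] (hf : f ≠ 0) (hg : g ≠ 0) :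
    minDegree (f * g) = minDegree f + minDegree g := by
  simp only [minDegree_eq_neg_maxDegree_invert, map_mul]
  rw [maxDegree_mul (by simpa using hf) (by simpa using hg), neg_add]

lemma minDegree_T [Nontrivial R] (n : ℤ) : minDegree (T n : R[T;T⁻¹]) = n := by
  rw [minDegree_eq_neg_maxDegree_invert, invert_T, maxDegree_T, neg_neg]

lemma minDegree_sum_of_lt {ι : Type*} {s : Finset ι} {g : ι → R[T;T⁻¹]} {i : ι}
    (hi : i ∈ s) (hgi : g i ≠ 0)
    (hlt : ∀ j ∈ s, j ≠ i → minDegree (g i) < minDegree (g j)) :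
    minDegree (∑ j ∈ s, g j) = minDegree (g i) := by
  simp only [minDegree_eq_neg_maxDegree_invert, map_sum] at hlt ⊢
  rw [maxDegree_sum_of_lt hi (by simpa using hgi)
    fun j hj hji => neg_lt_neg_iff.1 (hlt j hj hji)]

end CommSemiring

end LaurentPolynomial

open LaurentPolynomial Filter

lemma breadthL_eq_maxDegree_sub_minDegree (f : ℤ[T;T⁻¹]) :
    breadthL f = maxDegree f - minDegree f := by
  obtain rfl | hf := eq_or_ne f 0
  · simp [breadthL]
  rw [breadthL, dif_pos (support_coeff_nonempty hf), maxDegree_eq_max' hf, minDegree_eq_min' hf]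

lemma breadthL_mul {f g : ℤ[T;T⁻¹]} (hf : f ≠ 0) (hg : g ≠ 0) :
    breadthL (f * g) = breadthL f + breadthL g := by
  simp only [breadthL_eq_maxDegree_sub_minDegree, maxDegree_mul hf hg, minDegree_mul hf hg]
  ring

lemma breadthL_neg (f : ℤ[T;T⁻¹]) : breadthL (-f) = breadthL f := by
  simp [breadthL]

lemma breadthL_add_breadthL_of_mul_eq_neg_mul {A B f g : ℤ[T;T⁻¹]} (hA : A ≠ 0)
    (hf : f ≠ 0) (hg : g ≠ 0) (h : A * g = -B * f) :
    breadthL A + breadthL g = breadthL B + breadthL f := by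
  have hB : B ≠ 0 := by
    rintro rfl
    exact mul_ne_zero hA hg (by simpa using h)
  have := congrArg breadthL h
  rwa [breadthL_mul hA hg, breadthL_mul (neg_ne_zero.2 hB) hf, breadthL_neg] at this

lemma subM_eq_sum (P : LaurentPolynomial ℤ[T;T⁻¹]) (s : ℤ) :
    subM P s = ∑ k ∈ P.coeff.support, P.coeff k * T (s * k) := rfl

lemma subM_invert (P : LaurentPolynomial ℤ[T;T⁻¹]) (s : ℤ) :
    subM (invert P) s = subM P (-s) := by
  rw [subM_eq_sum, subM_eq_sum]
  refine Finset.sum_nbij' Neg.neg Neg.neg (by simp) (by simp) (by simp) (by simp) fun k _ => ?_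
  simp

lemma eventually_add_mul_lt_add_mul {j k : ℤ} (hjk : j < k) (a b : ℤ) :
    ∀ᶠ s in atTop, a + s * j < b + s * k := by
  filter_upwards [eventually_ge_atTop (a - b + 1), eventually_ge_atTop 0] with s hs hs₀
  have : s * (j + 1) ≤ s * k := mul_le_mul_of_nonneg_left hjk hs₀
  linarith

section subM

variable {P : LaurentPolynomial ℤ[T;T⁻¹]}

lemma eventually_maxDegree_subM_atTop (hP : P ≠ 0) :
    ∀ᶠ s in atTop,
      maxDegree (subM P s) = maxDegree (P.coeff (maxDegree P)) + s * maxDegree P := by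
  set K := maxDegree P
  have hK : K ∈ P.coeff.support := Finsupp.mem_support_iff.2 (coeff_maxDegree_ne_zero hP)
  have hdom : ∀ᶠ s in atTop, ∀ j ∈ P.coeff.support.erase K,
      maxDegree (P.coeff j) + s * j < maxDegree (P.coeff K) + s * K :=
    (eventually_all_finset _).2 fun j hj => eventually_add_mul_lt_add_mul
      ((le_maxDegree (Finsupp.mem_support_iff.1 (Finset.mem_of_mem_erase hj))).lt_of_ne
        (Finset.ne_of_mem_erase hj)) _ _
  filter_upwards [hdom] with s hs
  have hdeg : ∀ j ∈ P.coeff.support,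
      maxDegree (P.coeff j * T (s * j)) = maxDegree (P.coeff j) + s * j := fun j hj => by
    rw [maxDegree_mul (Finsupp.mem_support_iff.1 hj) (isUnit_T _).ne_zero, maxDegree_T]
  rw [subM_eq_sum, maxDegree_sum_of_lt hK
    (mul_ne_zero (Finsupp.mem_support_iff.1 hK) (isUnit_T _).ne_zero) fun j hj hjK => ?_, hdeg K hK]
  rw [hdeg j hj, hdeg K hK]
  exact hs j (Finset.mem_erase.2 ⟨hjK, hj⟩)

lemma eventually_minDegree_subM_atTop (hP : P ≠ 0) :
    ∀ᶠ s in atTop,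
      minDegree (subM P s) = minDegree (P.coeff (minDegree P)) + s * minDegree P := by
  set k := minDegree P
  have hk : k ∈ P.coeff.support := Finsupp.mem_support_iff.2 (coeff_minDegree_ne_zero hP)
  have hdom : ∀ᶠ s in atTop, ∀ j ∈ P.coeff.support.erase k,
      minDegree (P.coeff k) + s * k < minDegree (P.coeff j) + s * j :=
    (eventually_all_finset _).2 fun j hj => eventually_add_mul_lt_add_mul
      ((minDegree_le (Finsupp.mem_support_iff.1 (Finset.mem_of_mem_erase hj))).lt_of_ne'
        (Finset.ne_of_mem_erase hj)) _ _
  filter_upwards [hdom] with s hs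
  have hdeg : ∀ j ∈ P.coeff.support,
      minDegree (P.coeff j * T (s * j)) = minDegree (P.coeff j) + s * j := fun j hj => by
    rw [minDegree_mul (Finsupp.mem_support_iff.1 hj) (isUnit_T _).ne_zero, minDegree_T]
  rw [subM_eq_sum, minDegree_sum_of_lt hk
    (mul_ne_zero (Finsupp.mem_support_iff.1 hk) (isUnit_T _).ne_zero) fun j hj hjk => ?_, hdeg k hk]
  rw [hdeg j hj, hdeg k hk]
  exact hs j (Finset.mem_erase.2 ⟨hjk, hj⟩)

lemma exists_eventually_breadthL_subM_atTop (hP : P ≠ 0) :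
    ∃ b, ∀ᶠ s in atTop, breadthL (subM P s) = (maxDegree P - minDegree P) * s + b := by
  refine ⟨maxDegree (P.coeff (maxDegree P)) - minDegree (P.coeff (minDegree P)), ?_⟩
  filter_upwards [eventually_maxDegree_subM_atTop hP,
    eventually_minDegree_subM_atTop hP] with s hmax hmin
  rw [breadthL_eq_maxDegree_sub_minDegree, hmax, hmin]
  ring

lemma exists_eventually_breadthL_subM_atBot (hP : P ≠ 0) :
    ∃ b, ∀ᶠ s in atBot, breadthL (subM P s) = -(maxDegree P - minDegree P) * s + b := by
  obtain ⟨b, hb⟩ := exists_eventually_breadthL_subM_atTop (P := invert P) (by simpa using hP)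
  refine ⟨b, (tendsto_neg_atBot_atTop.eventually hb).mono fun s hs => ?_⟩
  rw [← neg_neg s, ← subM_invert, hs, maxDegree_invert, minDegree_invert]
  ring

end subM

lemma exists_eventually_eq_mul_add_of_eventually_add {u : ℤ → ℤ} {c : ℤ}
    (h : ∀ᶠ n in atTop, u (n + 1) = u n + c) : ∃ b, ∀ᶠ n in atTop, u n = c * n + b := by
  obtain ⟨N, hN⟩ := eventually_atTop.1 h
  refine ⟨u N - c * N, eventually_atTop.2 ⟨N, fun n hn => ?_⟩⟩
  induction n, hn using Int.leInduction with
  | base => ring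
  | succ m hm ih => rw [hN m hm, ih]; ring

/-- If `f : ℤ → ℤ[t^{±1}]` satisfies, for all large `n`,
`f(n+1) = −(P(t, t^{−2−2n}) / P(t, t^{2n})) f(n)` (stated denominator-free as
`P(t, t^{2n}) f(n+1) = −P(t, t^{−2−2n}) f(n)`) for a fixed nonzero
`P ∈ ℤ[t^{±1}, M^{±1}]` with `P(t, t^{2n}) ≠ 0` and `f(n) ≠ 0` for large `n`,
then the breadth of `f(n)` is eventually a linear function of `n`. -/
theorem breadth_eventually_linear
    (P : LaurentPolynomial (LaurentPolynomial ℤ)) (hP : P ≠ 0)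
    (f : ℤ → LaurentPolynomial ℤ) (N : ℤ)
    (h : ∀ n : ℤ, N ≤ n →
      subM P (2 * n) ≠ 0 ∧ f n ≠ 0 ∧
      subM P (2 * n) * f (n + 1) = -(subM P (-2 - 2 * n)) * f n) :
    ∃ (a b N' : ℤ), ∀ n : ℤ, N' ≤ n → breadthL (f n) = a * n + b := by
  obtain ⟨bTop, hA⟩ := exists_eventually_breadthL_subM_atTop hP
  obtain ⟨bBot, hB⟩ := exists_eventually_breadthL_subM_atBot hP
  have hpos : Tendsto (fun n : ℤ => 2 * n) atTop atTop := tendsto_id.const_mul_atTop' two_pos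
  have hneg : Tendsto (fun n : ℤ => -2 - 2 * n) atTop atBot :=
    tendsto_atTop_atBot.2 fun b => ⟨max (-b) 0, fun n hn => by omega⟩
  have hstep : ∀ᶠ n in atTop, breadthL (f (n + 1)) =
      breadthL (f n) + (2 * (maxDegree P - minDegree P) + bBot - bTop) := by
    filter_upwards [eventually_ge_atTop N, hpos.eventually hA, hneg.eventually hB]
      with n hn hAn hBn
    obtain ⟨hPn, hfn, hrec⟩ := h n hn
    have := breadthL_add_breadthL_of_mul_eq_neg_mul hPn hfn (h (n + 1) (by omega)).2.1 hrec
    rw [hAn, hBn] at this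
    linarith
  obtain ⟨b, hb⟩ :=
    exists_eventually_eq_mul_add_of_eventually_add (u := fun n => breadthL (f n)) hstep
  obtain ⟨N', hN'⟩ := eventually_atTop.1 hb
  exact ⟨_, b, N', hN'⟩
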